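/- For any cluster X ∈ Z_i and any two demands d_1 = (s_1,t_1) and d_2 = (s_2,t_2) in X(A): the sources satisfy dist(s_1, s_2) ≤ 2σγ_i = γ_{i+1}/2, and if d_1 selects a level-(i+1) leader whose cluster X_{i+1} at-least-(γ_{i+1}/2)-satisfies s_1, then s_2 ∈ X_{i+1}. Consequently, since every node belongs to at most β clusters of Z_{i+1}, the demands of X(A) select at most β distinct level-(i+1) leaders. -/

import Mathlib

/-!
Statement 10 (leader-counting step in the proof of Lemma `upper-bound`).

For any cluster `X ∈ Z_i` and any two demands `d₁ = (s₁,t₁)` and `d₂ = (s₂,t₂)`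
in `X(A)`: the sources satisfy `dist(s₁,s₂) ≤ 2σγ_i = γ_{i+1}/2`, and if `d₁`
selects a level-`(i+1)` leader whose cluster `X_{i+1}`
at-least-`(γ_{i+1}/2)`-satisfies `s₁`, then `s₂ ∈ X_{i+1}`.  Consequently,
since every node belongs to at most `β` clusters of `Z_{i+1}`, the demands of
`X(A)` select at most `β` distinct level-`(i+1)` leaders.
-/

open scoped ENat

variable {V : Type*}

/-- weighted shortest-path distance in `(G, wt)` (`⊤` if there is no walk). -/
noncomputable def wdist (G : SimpleGraph V) (wt : Sym2 V → ℕ) (u v : V) : ℕ∞ :=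
  sInf {L : ℕ∞ | ∃ p : G.Walk u v, ((p.edges.map wt).sum : ℕ∞) = L}

/-- The cluster `X` `k`-satisfies `v`: the `k`-neighborhood of `v` is in `X`. -/
def KSat (dist : V → V → ℕ∞) (X : Set V) (k : ℕ) (v : V) : Prop :=
  ∀ u, dist v u ≤ (k : ℕ∞) → u ∈ X

/-- `dist(X, Y) ≤ k` for two clusters. -/
def ClusterDistLE (dist : V → V → ℕ∞) (k : ℕ) (X Y : Set V) : Prop :=
  ∃ u ∈ X, ∃ v ∈ Y, KSat dist X k u ∧ KSat dist Y k v ∧ dist u v ≤ (k : ℕ∞)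

def HasK5Minor (G : SimpleGraph V) : Prop :=
  ∃ B : Fin 5 → Set V,
    (∀ i, (B i).Nonempty) ∧
    (∀ i, (G.induce (B i)).Connected) ∧
    (Pairwise fun i j => Disjoint (B i) (B j)) ∧
    (Pairwise fun i j => ∃ u ∈ B i, ∃ v ∈ B j, G.Adj u v)

def HasK33Minor (G : SimpleGraph V) : Prop :=
  ∃ B C : Fin 3 → Set V,
    (∀ i, (B i).Nonempty) ∧ (∀ i, (C i).Nonempty) ∧
    (∀ i, (G.induce (B i)).Connected) ∧ (∀ i, (G.induce (C i)).Connected) ∧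
    (Pairwise fun i j => Disjoint (B i) (B j)) ∧
    (Pairwise fun i j => Disjoint (C i) (C j)) ∧
    (∀ i j, Disjoint (B i) (C j)) ∧
    (∀ i j, ∃ u ∈ B i, ∃ v ∈ C j, G.Adj u v)

/-- Wagner's characterization of planarity: no `K₅` minor and no `K₃,₃` minor. -/
def IsPlanar (G : SimpleGraph V) : Prop := ¬ HasK5Minor G ∧ ¬ HasK33Minor G

/-- A canonical fusion function: non-negative, non-decreasing, concave,
`f 0 = 0`, and subadditive. -/
structure Canonical (f : ℕ → ℝ) : Prop where
  nonneg : ∀ n, 0 ≤ f n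
  mono : Monotone f
  zero : f 0 = 0
  subadd : ∀ a b : ℕ, f (a + b) ≤ f a + f b
  concave : ∀ n : ℕ, f (n + 2) + f n ≤ 2 * f (n + 1)

/-- The total cost `C(A) = Σ_e f(|φ_e(A)|)·w_e` of routing the demands of `A`
along the walks `R d` (the demand `d` goes from `src d` to `tgt d`). -/
noncomputable def routeCost {ι : Type*} [Fintype V] [DecidableEq V] [DecidableEq ι]
    (G : SimpleGraph V) [DecidableRel G.Adj] (wt : Sym2 V → ℕ) (f : ℕ → ℝ)
    (A : Finset ι) {src tgt : ι → V} (R : (d : ι) → G.Walk (src d) (tgt d)) : ℝ :=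
  ∑ e ∈ G.edgeFinset, f ((A.filter fun d => e ∈ (R d).edges).card) * (wt e : ℝ)

/-- The optimal cost `C*(A)`: the minimum of `C(A)` over all choices of one
routing path per demand. -/
noncomputable def optCost {ι : Type*} [Fintype V] [DecidableEq V] [DecidableEq ι]
    (G : SimpleGraph V) [DecidableRel G.Adj] (wt : Sym2 V → ℕ) (f : ℕ → ℝ)
    (A : Finset ι) (src tgt : ι → V) : ℝ :=
  sInf {c : ℝ | ∃ R : (d : ι) → G.Walk (src d) (tgt d), c = routeCost G wt f A R}

/-- The (weighted) diameter `D` of the graph. -/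
noncomputable def wdiam [Fintype V] (G : SimpleGraph V) (wt : Sym2 V → ℕ) : ℕ :=
  (Finset.univ.sup fun p : V × V => wdist G wt p.1 p.2).toNat

lemma wdist_le_walk (G : SimpleGraph V) (wt : Sym2 V → ℕ) {u v : V} (p : G.Walk u v) :
    wdist G wt u v ≤ ((p.edges.map wt).sum : ℕ∞) :=
  sInf_le ⟨p, rfl⟩

lemma wdist_self (G : SimpleGraph V) (wt : Sym2 V → ℕ) (v : V) :
    wdist G wt v v = 0 := by
  refine le_antisymm ?_ (zero_le)
  simpa using wdist_le_walk G wt (SimpleGraph.Walk.nil : G.Walk v v)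

lemma wdist_comm (G : SimpleGraph V) (wt : Sym2 V → ℕ) (u v : V) :
    wdist G wt u v = wdist G wt v u := by
  unfold wdist
  congr 1
  ext L
  constructor
  · rintro ⟨p, rfl⟩
    exact ⟨p.reverse, by simp [SimpleGraph.Walk.edges_reverse, List.map_reverse, List.sum_reverse]⟩
  · rintro ⟨p, rfl⟩
    exact ⟨p.reverse, by simp [SimpleGraph.Walk.edges_reverse, List.map_reverse, List.sum_reverse]⟩

lemma wdist_triangle (G : SimpleGraph V) (hconn : G.Connected) (wt : Sym2 V → ℕ)
    (u v w : V) : wdist G wt u w ≤ wdist G wt u v + wdist G wt v w := by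
  obtain ⟨p⟩ := hconn u v
  obtain ⟨q⟩ := hconn v w
  have h1 : wdist G wt u v ∈ {L : ℕ∞ | ∃ p : G.Walk u v, ((p.edges.map wt).sum : ℕ∞) = L} :=
    csInf_mem ⟨_, p, rfl⟩
  have h2 : wdist G wt v w ∈ {L : ℕ∞ | ∃ p : G.Walk v w, ((p.edges.map wt).sum : ℕ∞) = L} :=
    csInf_mem ⟨_, q, rfl⟩
  obtain ⟨p', hp'⟩ := h1
  obtain ⟨q', hq'⟩ := h2
  calc wdist G wt u w ≤ (((p'.append q').edges.map wt).sum : ℕ∞) :=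
        wdist_le_walk G wt _
    _ = wdist G wt u v + wdist G wt v w := by
        rw [← hp', ← hq']
        push_cast [SimpleGraph.Walk.edges_append, List.map_append, List.sum_append]
        rfl

theorem leaders_selected_at_most_beta
    {ι : Type*} [Fintype V] [DecidableEq V]
    (G : SimpleGraph V) [DecidableRel G.Adj]
    (hconn : G.Connected) (hplanar : IsPlanar G)
    (wt : Sym2 V → ℕ) (hwt : ∀ e ∈ G.edgeSet, 1 ≤ wt e)
    -- the parameters of the analysis:
    (σ β : ℕ) (hσ : σ = 24) (hβ : β = 18)
    (γ : ℕ → ℕ) (hγ : ∀ i, γ i = (4 * σ) ^ (i - 1))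
    -- the covers `Z_i` with their leaders:
    (Z : ℕ → Finset (Set V)) (leader : Set V → V)
    (hleader : ∀ i, ∀ X ∈ Z i, leader X ∈ X)
    -- `Z_i` has degree at most `β`:
    (hdeg : ∀ i, 1 ≤ i → ∀ v : V,
        ({Y | Y ∈ Z i ∧ v ∈ Y} : Set (Set V)).ncard ≤ β)
    -- `Z_i` has stretch at most `σ` (every cluster has radius `≤ σγ_i`
    -- around its leader):
    (hradius : ∀ i, 1 ≤ i → ∀ X ∈ Z i, ∀ v ∈ X,
        wdist G wt (leader X) v ≤ ((σ * γ i : ℕ) : ℕ∞))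
    -- the level `i ≥ 1` and a cluster `X ∈ Z_i`:
    (i : ℕ) (hi : 1 ≤ i) (X : Set V) (hX : X ∈ Z i)
    -- the demand set `X(A)`: sources of its demands are `γ_i`-satisfied in `X`
    (src : ι → V) (D : Finset ι)
    (hD_sat : ∀ d ∈ D, KSat (wdist G wt) X (γ i) (src d))
    -- each demand `d ∈ X(A)` selects a level-`(i+1)` cluster `Lsel d ∈ Z_{i+1}`
    -- that `γ_{i+1}`-satisfies its source, and thereby the leader of `Lsel d`:
    (Lsel : ι → Set V)
    (hLsel_mem : ∀ d ∈ D, Lsel d ∈ Z (i + 1))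
    (hLsel_sat : ∀ d ∈ D, KSat (wdist G wt) (Lsel d) (γ (i + 1)) (src d)) :
    -- `2σγ_i = γ_{i+1}/2` …
    (2 * (2 * σ * γ i) = γ (i + 1)) ∧
    -- … the sources of any two demands of `X(A)` satisfy
    -- `dist(s₁,s₂) ≤ 2σγ_i` …
    (∀ d₁ ∈ D, ∀ d₂ ∈ D,
        wdist G wt (src d₁) (src d₂) ≤ ((2 * σ * γ i : ℕ) : ℕ∞)) ∧
    -- … if the selected cluster `X'` `(γ_{i+1}/2)`-satisfies `s₁` then
    -- `s₂ ∈ X'` …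
    (∀ d₁ ∈ D, ∀ X' ∈ Z (i + 1),
        KSat (wdist G wt) X' (γ (i + 1) / 2) (src d₁) →
        ∀ d₂ ∈ D, src d₂ ∈ X') ∧
    -- … and consequently the demands of `X(A)` select at most `β` distinct
    -- level-`(i+1)` leaders:
    ((fun d => leader (Lsel d)) '' (D : Set ι)).ncard ≤ β := by
  -- Part 1: arithmetic identity
  have hpart1 : 2 * (2 * σ * γ i) = γ (i + 1) := by
    rw [hγ, hγ, hσ]
    have : i + 1 - 1 = (i - 1) + 1 := by omega
    rw [this, pow_succ]
    ring
  -- Part 2: distance between sources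
  have hpart2 : ∀ d₁ ∈ D, ∀ d₂ ∈ D,
      wdist G wt (src d₁) (src d₂) ≤ ((2 * σ * γ i : ℕ) : ℕ∞) := by
    intro d₁ hd₁ d₂ hd₂
    have hs₁X : src d₁ ∈ X := hD_sat d₁ hd₁ (src d₁) (by simp [wdist_self])
    have hs₂X : src d₂ ∈ X := hD_sat d₂ hd₂ (src d₂) (by simp [wdist_self])
    have h1 : wdist G wt (src d₁) (leader X) ≤ ((σ * γ i : ℕ) : ℕ∞) := by
      rw [wdist_comm]; exact hradius i hi X hX (src d₁) hs₁X
    have h2 : wdist G wt (leader X) (src d₂) ≤ ((σ * γ i : ℕ) : ℕ∞) :=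
      hradius i hi X hX (src d₂) hs₂X
    calc wdist G wt (src d₁) (src d₂)
        ≤ wdist G wt (src d₁) (leader X) + wdist G wt (leader X) (src d₂) :=
          wdist_triangle G hconn wt _ _ _
      _ ≤ ((σ * γ i : ℕ) : ℕ∞) + ((σ * γ i : ℕ) : ℕ∞) := add_le_add h1 h2
      _ = ((2 * σ * γ i : ℕ) : ℕ∞) := by push_cast; ring
  -- Part 3
  have hhalf : γ (i + 1) / 2 = 2 * σ * γ i := by omega
  have hpart3 : ∀ d₁ ∈ D, ∀ X' ∈ Z (i + 1),
      KSat (wdist G wt) X' (γ (i + 1) / 2) (src d₁) →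
      ∀ d₂ ∈ D, src d₂ ∈ X' := by
    intro d₁ hd₁ X' _ hK d₂ hd₂
    exact hK (src d₂) (by rw [hhalf]; exact hpart2 d₁ hd₁ d₂ hd₂)
  refine ⟨hpart1, hpart2, hpart3, ?_⟩
  -- Part 4
  rcases D.eq_empty_or_nonempty with hKe | ⟨d₀, hd₀⟩
  · simp [hKe]
  · -- every selected cluster contains src d₀
    have hmem : ∀ d ∈ D, src d₀ ∈ Lsel d := by
      intro d hd
      refine hpart3 d hd (Lsel d) (hLsel_mem d hd) ?_ d₀ hd₀
      intro u hu
      exact hLsel_sat d hd u (hu.trans (by exact_mod_cast Nat.div_le_self _ 2))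
    set S : Set (Set V) := {Y | Y ∈ Z (i + 1) ∧ src d₀ ∈ Y} with hS
    have hSfin : S.Finite := (Z (i + 1) : Finset (Set V)).finite_toSet.subset
      (fun Y hY => hY.1)
    have hsub : ((fun d => leader (Lsel d)) '' (D : Set ι)) ⊆ leader '' S := by
      rintro x ⟨d, hd, rfl⟩
      exact ⟨Lsel d, ⟨hLsel_mem d hd, hmem d hd⟩, rfl⟩
    calc ((fun d => leader (Lsel d)) '' (D : Set ι)).ncard
        ≤ (leader '' S).ncard := Set.ncard_le_ncard hsub (hSfin.image _)
      _ ≤ S.ncard := Set.ncard_image_le hSfin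
      _ ≤ β := hdeg (i + 1) (by omega) (src d₀)
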